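/- arXiv:1808.02211 — 3 statements merged into one kernel-verified Lean document; each statement's English description precedes it below -/
import Mathlib

section
/- Let T be the 2×2 matrix [[1,1],[0,1]] and let L_T be the induced linear map on S^d(R^2) sending each rank-one tensor u^{⊗d} to (Tu)^{⊗d}. For a tensor A ∈ S^d(R^2), let y ∈ R^{d+1} be defined by y_k = (L_T(A))_{i1...id} where k = i1+...+id − d. Then y = λ_1 (1,t_1,...,t_1^d) + ... + λ_r (1,t_r,...,t_r^d) holds if and only if A = λ_1 (1−t_1, t_1)^{⊗d} + ... + λ_r (1−t_r, t_r)^{⊗d}. -/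
open Matrix MeasureTheory Set

noncomputable section

/-- The `d`-th symmetric tensor power `v^{⊗ d}` of a vector `v ∈ ℝ²`,
viewed as the array of entries indexed by `Fin d → Fin 2`. -/
def tpow (d : ℕ) (v : Fin 2 → ℝ) : (Fin d → Fin 2) → ℝ :=
  fun idx => ∏ k, v (idx k)

/-- A binary tensor is symmetric if its entries are invariant under index permutations. -/
def IsSymTensor (d : ℕ) (A : (Fin d → Fin 2) → ℝ) : Prop :=
  ∀ (σ : Equiv.Perm (Fin d)) (idx : Fin d → Fin 2), A (idx ∘ σ) = A idx

/-- A binary tensor is completely positive (CP) if it is a finite sum of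
`d`-th tensor powers of nonnegative vectors in `ℝ²`. -/
def IsCP (d : ℕ) (A : (Fin d → Fin 2) → ℝ) : Prop :=
  ∃ (r : ℕ) (v : Fin r → Fin 2 → ℝ),
    (∀ i j, 0 ≤ v i j) ∧ A = ∑ i, tpow d (v i)

/-- The cp-rank: the minimal length of a cp-decomposition. -/
def cpRank (d : ℕ) (A : (Fin d → Fin 2) → ℝ) : ℕ :=
  sInf {r | ∃ v : Fin r → Fin 2 → ℝ,
    (∀ i j, 0 ≤ v i j) ∧ A = ∑ i, tpow d (v i)}

/-- The matrix `T = [[1,1],[0,1]]`. -/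
def matT : Matrix (Fin 2) (Fin 2) ℝ := !![1, 1; 0, 1]

/-- The linear map `L_T` on binary tensors induced by a matrix `T`
(multilinear matrix multiplication by `T` in each mode);
it sends `u^{⊗ d}` to `(T u)^{⊗ d}`. -/
def Lmul (d : ℕ) (T : Matrix (Fin 2) (Fin 2) ℝ)
    (A : (Fin d → Fin 2) → ℝ) : (Fin d → Fin 2) → ℝ :=
  fun idx => ∑ j : Fin d → Fin 2, (∏ k, T (idx k) (j k)) * A j

/-- The truncated moment sequence `y` associated to a binary tensor `A`:
`y k` is the entry of `L_T (A)` whose index has exactly `k` components equal to `2`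
(here encoded as `1 : Fin 2`). -/
def momSeq (d : ℕ) (A : (Fin d → Fin 2) → ℝ) : ℕ → ℝ :=
  fun k => Lmul d matT A (fun i => if (i : ℕ) < k then 1 else 0)

/-- The Hankel moment matrix `H₁(y) = (y_{i+j})_{0 ≤ i,j ≤ s}`. -/
def H1 (s : ℕ) (y : ℕ → ℝ) : Matrix (Fin (s + 1)) (Fin (s + 1)) ℝ :=
  fun i j => y ((i : ℕ) + (j : ℕ))

/-- The localizing Hankel matrix `H₂(y) = (y_{i+j+1} - y_{i+j+2})_{0 ≤ i,j ≤ s-1}`. -/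
def H2 (s : ℕ) (y : ℕ → ℝ) : Matrix (Fin s) (Fin s) ℝ :=
  fun i j => y ((i : ℕ) + (j : ℕ) + 1) - y ((i : ℕ) + (j : ℕ) + 2)

/-- The localizing Hankel matrix `H₃(y) = (y_{i+j+1})_{0 ≤ i,j ≤ s}`. -/
def H3 (s : ℕ) (y : ℕ → ℝ) : Matrix (Fin (s + 1)) (Fin (s + 1)) ℝ :=
  fun i j => y ((i : ℕ) + (j : ℕ) + 1)

/-- The localizing Hankel matrix `H₄(y) = (y_{i+j} - y_{i+j+1})_{0 ≤ i,j ≤ s}`. -/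
def H4 (s : ℕ) (y : ℕ → ℝ) : Matrix (Fin (s + 1)) (Fin (s + 1)) ℝ :=
  fun i j => y ((i : ℕ) + (j : ℕ)) - y ((i : ℕ) + (j : ℕ) + 1)

/-!
`L_T` is multiplication by the `d`-th Kronecker power of `T`, so it is injective because `T` is
invertible, and it sends `(1 - t, t)^{⊗d}` to `(T (1 - t, t))^{⊗d} = (1, t)^{⊗d}`, whose entry with
`k` indices equal to `2` is `t^k`. It also preserves symmetry, and a symmetric binary tensor is
determined by its entries `(2, …, 2, 1, …, 1)`; for `L_T(A)` these are the `y_k`. Hence `y`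
determines `A` among symmetric tensors, and both directions follow by linearity.
-/

namespace Matrix

variable {ι m n p R : Type*} [Fintype ι] [CommSemiring R]

def kronPow (ι : Type*) [Fintype ι] (T : Matrix m n R) : Matrix (ι → m) (ι → n) R :=
  of fun x y => ∏ k, T (x k) (y k)

@[simp]
lemma kronPow_apply (T : Matrix m n R) (x : ι → m) (y : ι → n) :
    kronPow ι T x y = ∏ k, T (x k) (y k) := rfl

lemma kronPow_mul [DecidableEq ι] [Fintype n] (S : Matrix m n R) (T : Matrix n p R) :
    kronPow ι S * kronPow ι T = kronPow ι (S * T) := by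
  ext x z
  simp only [mul_apply, kronPow_apply, ← Finset.prod_mul_distrib, Fintype.prod_sum]

lemma kronPow_one [DecidableEq m] : kronPow ι (1 : Matrix m m R) = 1 := by
  ext x y
  by_cases hxy : x = y
  · simp [hxy, one_apply]
  · obtain ⟨k, hk⟩ := Function.ne_iff.mp hxy
    simp [hxy, one_apply, Finset.prod_eq_zero (Finset.mem_univ k), hk]

lemma kronPow_mulVec_prod [DecidableEq ι] [Fintype n] (T : Matrix m n R) (v : n → R) :
    kronPow ι T *ᵥ (fun y => ∏ k, v (y k)) = fun x => ∏ k, (T *ᵥ v) (x k) := by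
  ext x
  simp only [mulVec, dotProduct, kronPow_apply, ← Finset.prod_mul_distrib, Fintype.prod_sum]

end Matrix

open Matrix

lemma Lmul_eq_kronPow_mulVec (d : ℕ) (T : Matrix (Fin 2) (Fin 2) ℝ) (A : (Fin d → Fin 2) → ℝ) :
    Lmul d T A = kronPow (Fin d) T *ᵥ A := by
  ext x
  simp [Lmul, mulVec, dotProduct]

lemma Lmul_injective {d : ℕ} {T : Matrix (Fin 2) (Fin 2) ℝ} (hT : IsUnit T.det) :
    Function.Injective (Lmul d T) := by
  intro A B h
  have hinv : ∀ C, Lmul d T⁻¹ (Lmul d T C) = C := fun C => by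
    simp only [Lmul_eq_kronPow_mulVec, mulVec_mulVec, kronPow_mul, nonsing_inv_mul _ hT,
      kronPow_one, one_mulVec]
  rw [← hinv A, h, hinv B]

lemma Lmul_tpow (d : ℕ) (T : Matrix (Fin 2) (Fin 2) ℝ) (v : Fin 2 → ℝ) :
    Lmul d T (tpow d v) = tpow d (T *ᵥ v) := by
  rw [Lmul_eq_kronPow_mulVec]
  exact kronPow_mulVec_prod T v

lemma tpow_isSymTensor (d : ℕ) (v : Fin 2 → ℝ) : IsSymTensor d (tpow d v) :=
  fun σ x => Equiv.prod_comp σ (fun k => v (x k))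

lemma isSymTensor_sum_smul_tpow {d : ℕ} {ι : Type*} (s : Finset ι) (c : ι → ℝ)
    (v : ι → Fin 2 → ℝ) : IsSymTensor d (∑ i ∈ s, c i • tpow d (v i)) := by
  intro σ x
  simp only [Finset.sum_apply, Pi.smul_apply, tpow_isSymTensor d _ σ x]

lemma IsSymTensor.Lmul {d : ℕ} {A : (Fin d → Fin 2) → ℝ} (hA : IsSymTensor d A)
    (T : Matrix (Fin 2) (Fin 2) ℝ) : IsSymTensor d (Lmul d T A) := by
  intro σ x
  simp only [_root_.Lmul]
  rw [← (Equiv.arrowCongr σ.symm (Equiv.refl (Fin 2))).sum_comp]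
  refine Fintype.sum_congr _ _ fun y => ?_
  change (∏ k, T (x (σ k)) (y (σ k))) * A (y ∘ σ) = _
  rw [hA σ y, Equiv.prod_comp σ (fun k => T (x k) (y k))]

lemma Lmul_sum_smul_tpow {d : ℕ} {ι : Type*} (T : Matrix (Fin 2) (Fin 2) ℝ) (s : Finset ι)
    (c : ι → ℝ) (v : ι → Fin 2 → ℝ) :
    Lmul d T (∑ i ∈ s, c i • tpow d (v i)) = ∑ i ∈ s, c i • tpow d (T *ᵥ v i) := by
  simp only [Lmul_eq_kronPow_mulVec, mulVec_sum, mulVec_smul, ← Lmul_tpow]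

open Finset

lemma exists_perm_comp_eq_of_card_eq {α : Type*} [Fintype α] {f g : α → Fin 2}
    (h : #{i | g i = 1} = #{i | f i = 1}) : ∃ σ : Equiv.Perm α, f ∘ σ = g := by
  obtain ⟨σ, hσ⟩ := Equiv.Perm.exists_map_finset_eq _ _ h
  refine ⟨σ, funext fun i => ?_⟩
  have hi : σ i ∈ ({i | f i = 1} : Finset α) ↔ i ∈ ({i | g i = 1} : Finset α) := by
    rw [← hσ]
    exact mem_map' σ.toEmbedding
  have fin_two_ext : ∀ a b : Fin 2, (a = 1 ↔ b = 1) → a = b := by decide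
  exact fin_two_ext _ _ (by simpa using hi)

def firstOnes (d k : ℕ) : Fin d → Fin 2 := fun i => if (i : ℕ) < k then 1 else 0

lemma card_firstOnes_eq_one {d k : ℕ} (hk : k ≤ d) : #{i | firstOnes d k i = 1} = k := by
  simp [firstOnes, Fin.card_filter_val_lt, hk]

lemma IsSymTensor.apply_eq_apply_firstOnes {d : ℕ} {A : (Fin d → Fin 2) → ℝ}
    (hA : IsSymTensor d A) (x : Fin d → Fin 2) : A x = A (firstOnes d #{i | x i = 1}) := by
  have hcard : #{i | x i = 1} ≤ d := (card_le_univ _).trans_eq (Fintype.card_fin d)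
  obtain ⟨σ, hσ⟩ := exists_perm_comp_eq_of_card_eq (f := x) (card_firstOnes_eq_one hcard)
  rw [← hσ, hA]

lemma IsSymTensor.ext_firstOnes {d : ℕ} {A B : (Fin d → Fin 2) → ℝ} (hA : IsSymTensor d A)
    (hB : IsSymTensor d B) (h : ∀ k ≤ d, A (firstOnes d k) = B (firstOnes d k)) : A = B := by
  ext x
  rw [hA.apply_eq_apply_firstOnes, hB.apply_eq_apply_firstOnes]
  exact h _ ((card_le_univ _).trans_eq (Fintype.card_fin d))

lemma tpow_firstOnes {d k : ℕ} (hk : k ≤ d) (a b : ℝ) :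
    tpow d ![a, b] (firstOnes d k) = b ^ k * a ^ (d - k) := by
  have hlt : #{i : Fin d | (i : ℕ) < k} = k := by simp [Fin.card_filter_val_lt, hk]
  have hge : #{i : Fin d | ¬(i : ℕ) < k} = d - k := by
    have := card_filter_add_card_filter_not (s := univ) fun i : Fin d => (i : ℕ) < k
    rw [card_univ, Fintype.card_fin] at this
    omega
  simp only [tpow, firstOnes, apply_ite, prod_ite, prod_const, hlt, hge]
  rfl

lemma momSeq_eq_Lmul_firstOnes (d k : ℕ) (A : (Fin d → Fin 2) → ℝ) :
    momSeq d A k = Lmul d matT A (firstOnes d k) := rfl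

lemma eq_of_momSeq_eq {d : ℕ} {A B : (Fin d → Fin 2) → ℝ} (hA : IsSymTensor d A)
    (hB : IsSymTensor d B) (h : ∀ k ≤ d, momSeq d A k = momSeq d B k) : A = B :=
  Lmul_injective (by simp [matT, det_fin_two]) ((hA.Lmul matT).ext_firstOnes (hB.Lmul matT) h)

lemma matT_mulVec (t : ℝ) : matT *ᵥ ![1 - t, t] = ![1, t] := by
  ext i
  fin_cases i <;> simp [matT]

lemma momSeq_sum_smul_tpow {d k r : ℕ} (hk : k ≤ d) (lam t : Fin r → ℝ) :
    momSeq d (∑ i, lam i • tpow d ![1 - t i, t i]) k = ∑ i, lam i * t i ^ k := by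
  simp only [momSeq_eq_Lmul_firstOnes, Lmul_sum_smul_tpow, matT_mulVec, Finset.sum_apply,
    Pi.smul_apply, tpow_firstOnes hk, one_pow, mul_one, smul_eq_mul]

/-- with `y` the moment sequence of `L_T(A)` for `T = [[1,1],[0,1]]`,
`y = Σ λ_i [t_i]_d` holds iff `A = Σ λ_i (1 - t_i, t_i)^{⊗d}`. -/
theorem stmt2 (d : ℕ) (A : (Fin d → Fin 2) → ℝ) (hSym : IsSymTensor d A)
    (r : ℕ) (lam t : Fin r → ℝ) :
    (∀ k ≤ d, momSeq d A k = ∑ i, lam i * t i ^ k) ↔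
      A = ∑ i, lam i • tpow d ![1 - t i, t i] := by
  constructor
  · intro h
    exact eq_of_momSeq_eq hSym (isSymTensor_sum_smul_tpow _ _ _)
      fun k hk => (h k hk).trans (momSeq_sum_smul_tpow hk lam t).symm
  · rintro rfl k hk
    exact momSeq_sum_smul_tpow hk lam t
end
end

section
/- Let y = (y_0,...,y_{2s+1}) with y_0 > 0, H_3(y) ⪰ 0, H_4(y) ⪰ 0, and let r = rank H_1(y) where H_1(y) = (y_{i+j})_{0≤i,j≤s}. Then y has a unique r-atomic representing measure, and its support is contained in [0,1]. -/
open Matrix MeasureTheory Set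

noncomputable section

/-!
Since `H₁ = H₃ + H₄` with `H₃, H₄ ⪰ 0`, we have `0 ⪯ H₃ ⪯ H₁`, hence `ker H₁ ⊆ ker H₃`. Factor
`H₁ = Wᵀ W` with `W` an `r × (s+1)` matrix of independent rows; then `H₃ = Wᵀ A W` with
`0 ⪯ A ⪯ 1`, and diagonalising `A = Q diag(μ) Qᵀ` gives `V = Qᵀ W` with `H₁ = Vᵀ V` and
`H₃ = Vᵀ diag(μ) V`. Column `k` of `H₃` is column `k + 1` of `H₁`, and `x ↦ xᵀ V` is injective,
so `V i k = c i * μ i ^ k`: this reads `y k = ∑ i, c i ^ 2 * μ i ^ k`, an `r`-atomic measure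
supported on the eigenvalues `μ i ∈ [0, 1]`, whose atoms are distinct and whose weights are
positive because the rows of `V` are independent.

Uniqueness: two `r`-atomic measures with the same first `2r` moments have a signed difference
supported on at most `2r` points with vanishing moments, which is zero by Vandermonde.
-/

namespace Matrix

variable {m n : Type*} [Fintype m] [Fintype n]

theorem exists_mul_eq_one_of_linearIndependent_rows {K : Type*} [Field K] [DecidableEq m]
    {W : Matrix m n K} (hW : LinearIndependent K W.row) : ∃ B : Matrix n m K, W * B = 1 := by
  rw [← mulVec_surjective_iff_exists_right_inverse, ← coe_mulVecLin, ← LinearMap.range_eq_top]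
  apply Submodule.eq_top_of_finrank_eq
  rw [Module.finrank_fintype_fun_eq_card, ← hW.rank_matrix]
  rfl

open scoped ComplexOrder in
theorem PosSemidef.mulVec_eq_zero_of_posSemidef_sub {𝕜 : Type*} [RCLike 𝕜] {M N : Matrix n n 𝕜}
    (hN : N.PosSemidef) (hMN : (M - N).PosSemidef) {x : n → 𝕜} (hx : M *ᵥ x = 0) :
    N *ᵥ x = 0 := by
  refine (hN.dotProduct_mulVec_zero_iff x).mp (le_antisymm ?_ (hN.dotProduct_mulVec_nonneg x))
  simpa [sub_mulVec, hx] using hMN.dotProduct_mulVec_nonneg x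

theorem PosSemidef.exists_eq_transpose_mul_mul [DecidableEq m] {W : Matrix m n ℝ}
    (hW : LinearIndependent ℝ W.row) {N : Matrix n n ℝ} (hN : N.PosSemidef)
    (hWN : (Wᵀ * W - N).PosSemidef) :
    ∃ A : Matrix m m ℝ, A.PosSemidef ∧ (1 - A).PosSemidef ∧ N = Wᵀ * A * W := by
  classical
  obtain ⟨B, hWB⟩ := exists_mul_eq_one_of_linearIndependent_rows hW
  -- `1 - B * W` maps into `ker W`, and `ker (Wᵀ * W) ⊆ ker N` because `0 ⪯ N ⪯ Wᵀ * W`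
  have hNBW : N * (B * W) = N := by
    have hker : N * (1 - B * W) = 0 := by
      refine ext_of_mulVec_single fun j => ?_
      rw [← mulVec_mulVec, zero_mulVec]
      refine hN.mulVec_eq_zero_of_posSemidef_sub hWN ?_
      rw [mulVec_mulVec, Matrix.mul_assoc, Matrix.mul_sub, ← Matrix.mul_assoc W B, hWB,
        Matrix.one_mul, Matrix.mul_one, sub_self, Matrix.mul_zero, zero_mulVec]
    rwa [Matrix.mul_sub, Matrix.mul_one, sub_eq_zero, eq_comm] at hker
  have hN_symm : Nᵀ = N := hN.1
  refine ⟨Bᵀ * N * B, hN.conjTranspose_mul_mul_same B, ?_, ?_⟩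
  · have h := hWN.conjTranspose_mul_mul_same B
    rwa [Matrix.mul_sub, Matrix.sub_mul, conjTranspose_eq_transpose_of_trivial,
      ← Matrix.mul_assoc, ← transpose_mul, Matrix.mul_assoc, hWB, transpose_one,
      Matrix.one_mul] at h
  · calc N = (B * W)ᵀ * N * (B * W) := by
          rw [Matrix.mul_assoc, hNBW, ← hN_symm, ← transpose_mul, hN_symm, hNBW, hN_symm]
      _ = Wᵀ * (Bᵀ * N * B) * W := by simp only [transpose_mul, Matrix.mul_assoc]

theorem IsHermitian.apply_eq_sum_eigenvalues [DecidableEq n] {A : Matrix n n ℝ}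
    (hA : A.IsHermitian) (a c : n) :
    A a c = ∑ j, hA.eigenvectorBasis j a * hA.eigenvalues j * hA.eigenvectorBasis j c := by
  conv_lhs => rw [hA.spectral_theorem]
  simp [Unitary.conjStarAlgAut_apply, mul_apply, diagonal]

theorem PosSemidef.exists_linearIndependent_rows_transpose_mul_self_eq [DecidableEq n]
    {M : Matrix n n ℝ} (hM : M.PosSemidef) :
    ∃ W : Matrix (Fin M.rank) n ℝ, LinearIndependent ℝ W.row ∧ Wᵀ * W = M := by
  classical
  set b := hM.1.eigenvectorBasis
  set ν := hM.1.eigenvalues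
  let e : Fin M.rank ≃ {j // ν j ≠ 0} :=
    (Fintype.equivFinOfCardEq hM.1.rank_eq_card_non_zero_eigs.symm).symm
  let w : Fin M.rank → ℝˣ := fun i =>
    Units.mk0 √(ν (e i)) (Real.sqrt_ne_zero'.2 ((hM.eigenvalues_nonneg _).lt_of_ne' (e i).2))
  let W : Matrix (Fin M.rank) n ℝ := of fun i a => √(ν (e i)) * b (e i) a
  refine ⟨W, ?_, ?_⟩
  · exact ((b.orthonormal.linearIndependent.map' (WithLp.linearEquiv 2 ℝ (n → ℝ)).toLinearMap
      (LinearEquiv.ker _)).comp _ (Subtype.val_injective.comp e.injective)).units_smul w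
  · ext a c
    let f : n → ℝ := fun j => b j a * ν j * b j c
    have hf : ∀ j, f j ≠ 0 → ν j ≠ 0 := fun j hj hν => hj (by simp [f, hν])
    calc (Wᵀ * W) a c = ∑ i : Fin M.rank, f (e i) := by
          refine (mul_apply ..).trans (Finset.sum_congr rfl fun i _ => ?_)
          simp only [transpose_apply, W, of_apply, f]
          rw [mul_mul_mul_comm, Real.mul_self_sqrt (hM.eigenvalues_nonneg _)]
          ring
      _ = ∑ j, f j := by
        rw [e.sum_comp (fun j => f j), ← Finset.sum_subtype {j | ν j ≠ 0} (by simp),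
          Finset.sum_filter_of_ne fun j _ => hf j]
      _ = M a c := (hM.1.apply_eq_sum_eigenvalues a c).symm

theorem IsHermitian.exists_orthogonal_diagonalization [DecidableEq n] {A : Matrix n n ℝ}
    (hA : A.IsHermitian) :
    ∃ (Q : Matrix n n ℝ) (μ : n → ℝ), Qᵀ * Q = 1 ∧ A = Q * diagonal μ * Qᵀ := by
  refine ⟨hA.eigenvectorUnitary, hA.eigenvalues,
    Unitary.coe_star_mul_self hA.eigenvectorUnitary, ?_⟩
  conv_lhs => rw [hA.spectral_theorem]
  simp [Unitary.conjStarAlgAut_apply, star_eq_conjTranspose,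
    conjTranspose_eq_transpose_of_trivial]

theorem exists_simultaneous_diagonalization [DecidableEq m] {W : Matrix m n ℝ}
    (hW : LinearIndependent ℝ W.row) {N : Matrix n n ℝ} (hN : N.PosSemidef)
    (hWN : (Wᵀ * W - N).PosSemidef) :
    ∃ (V : Matrix m n ℝ) (μ : m → ℝ), LinearIndependent ℝ V.row ∧ Vᵀ * V = Wᵀ * W ∧
      Vᵀ * diagonal μ * V = N ∧ ∀ i, μ i ∈ Set.Icc 0 1 := by
  obtain ⟨A, hA, hA1, rfl⟩ := hN.exists_eq_transpose_mul_mul hW hWN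
  obtain ⟨Q, μ, hQQ, rfl⟩ := hA.1.exists_orthogonal_diagonalization
  have hQQ' : Q * Qᵀ = 1 := mul_eq_one_comm.mp hQQ
  have hconj : Qᵀ * (Q * diagonal μ * Qᵀ) * Q = diagonal μ := by
    simp only [← Matrix.mul_assoc, hQQ, Matrix.one_mul]
    rw [Matrix.mul_assoc, hQQ, Matrix.mul_one]
  have hμ : (diagonal μ).PosSemidef := hconj ▸ hA.conjTranspose_mul_mul_same Q
  have hμ1 : (diagonal (1 - μ)).PosSemidef := by
    have h := hA1.conjTranspose_mul_mul_same Q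
    rwa [conjTranspose_eq_transpose_of_trivial, Matrix.mul_sub, Matrix.sub_mul, Matrix.mul_one,
      hQQ, hconj, ← diagonal_one, diagonal_sub] at h
  refine ⟨Qᵀ * W, μ, ?_, ?_, ?_, fun i => ⟨posSemidef_diagonal_iff.mp hμ i, ?_⟩⟩
  · rw [← vecMul_injective_iff] at hW ⊢
    have hQ : Function.Injective (Qᵀ).vecMul := fun x x' h => by
      simpa only [vecMul_vecMul, hQQ, vecMul_one] using congrArg (· ᵥ* Q) h
    intro x x' h
    exact hQ (hW (by simpa only [vecMul_vecMul] using h))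
  · rw [transpose_mul, transpose_transpose, Matrix.mul_assoc, ← Matrix.mul_assoc Q, hQQ',
      Matrix.one_mul]
  · rw [transpose_mul, transpose_transpose]
    simp only [Matrix.mul_assoc]
  · simpa [sub_nonneg] using posSemidef_diagonal_iff.mp hμ1 i

end Matrix

section Hankel

variable {s : ℕ}

theorem H1_eq_H3_add_H4 (y : ℕ → ℝ) : H1 s y = H3 s y + H4 s y := by
  ext i j
  simp [H1, H3, H4]

theorem H3_castSucc_eq_H1_succ (y : ℕ → ℝ) (i : Fin (s + 1)) (k : Fin s) :
    H3 s y i k.castSucc = H1 s y i k.succ := by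
  simp [H1, H3, add_assoc]

theorem eq_of_H1_eq_of_H3_eq {y z : ℕ → ℝ} (h1 : H1 s y = H1 s z) (h3 : H3 s y = H3 s z) :
    ∀ k ≤ 2 * s + 1, y k = z k := by
  intro k hk
  rcases hk.lt_or_eq with hk | rfl
  · have := congrFun₂ h1 ⟨min k s, by omega⟩ ⟨k - min k s, by omega⟩
    simpa [H1, show min k s + (k - min k s) = k by omega] using this
  · simpa [H3, two_mul] using congrFun₂ h3 (Fin.last s) (Fin.last s)

variable {m : Type*}

theorem ne_zero_and_injective_of_linearIndependent_pow {K : Type*} [Field K] {c μ : m → K}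
    (h : LinearIndependent K fun i (k : Fin (s + 1)) => c i * μ i ^ (k : ℕ)) :
    (∀ i, c i ≠ 0) ∧ Function.Injective μ := by
  have hc : ∀ i, c i ≠ 0 := fun i hci => h.ne_zero i (funext fun k => by simp [hci])
  refine ⟨hc, fun i j hij => by_contra fun hne => hc j ?_⟩
  have hpair : LinearIndependent K ![fun k : Fin (s + 1) => c i * μ i ^ (k : ℕ),
      fun k : Fin (s + 1) => c j * μ j ^ (k : ℕ)] := by
    convert h.comp ![i, j] (injective_pair_iff_ne.mpr hne) using 1
    ext l
    fin_cases l <;> rfl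
  refine (hpair.eq_zero_of_pair' (s := c j) (t := c i) (funext fun k => ?_)).1
  simp only [Pi.smul_apply, smul_eq_mul, hij]
  ring

variable [Fintype m] [DecidableEq m]

theorem apply_eq_mul_pow_of_H1_of_H3 {y : ℕ → ℝ} {V : Matrix m (Fin (s + 1)) ℝ} {μ : m → ℝ}
    (hV : LinearIndependent ℝ V.row) (h1 : Vᵀ * V = H1 s y)
    (h3 : Vᵀ * Matrix.diagonal μ * V = H3 s y) (i : m) (k : Fin (s + 1)) :
    V i k = V i 0 * μ i ^ (k : ℕ) := by
  have hshift : ∀ k : Fin s, (fun i => V i k.succ) = fun i => μ i * V i k.castSucc := by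
    intro k
    refine vecMul_injective_iff.mpr hV (funext fun a => ?_)
    have h := H3_castSucc_eq_H1_succ y a k
    rw [← h1, ← h3, Matrix.mul_assoc] at h
    simp only [mul_apply, transpose_apply, diagonal_apply, ite_mul, zero_mul, Finset.sum_ite_eq,
      Finset.mem_univ, if_true] at h
    simp only [vecMul, dotProduct]
    convert h.symm using 2 <;> ring
  induction k using Fin.induction with
  | zero => simp
  | succ k ih => rw [congrFun (hshift k) i, ih, Fin.val_succ, Fin.val_castSucc, pow_succ]; ring

theorem exists_atoms_of_H1_of_H3 {y : ℕ → ℝ} {V : Matrix m (Fin (s + 1)) ℝ} {μ : m → ℝ}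
    (hV : LinearIndependent ℝ V.row) (h1 : Vᵀ * V = H1 s y)
    (h3 : Vᵀ * Matrix.diagonal μ * V = H3 s y) :
    ∃ lam : m → ℝ, Function.Injective μ ∧ (∀ i, 0 < lam i) ∧
      ∀ k ≤ 2 * s + 1, y k = ∑ i, lam i * μ i ^ k := by
  obtain ⟨c, rfl⟩ : ∃ c : m → ℝ, V = of fun i (k : Fin (s + 1)) => c i * μ i ^ (k : ℕ) :=
    ⟨fun i => V i 0, ext fun i k => apply_eq_mul_pow_of_H1_of_H3 hV h1 h3 i k⟩
  obtain ⟨hc, hμ⟩ := ne_zero_and_injective_of_linearIndependent_pow hV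
  refine ⟨fun i => c i ^ 2, hμ, fun i => pow_two_pos_of_ne_zero (hc i),
    eq_of_H1_eq_of_H3_eq ?_ ?_⟩
  · rw [← h1]
    ext a b
    simp only [H1, mul_apply, transpose_apply, of_apply, pow_add]
    exact Finset.sum_congr rfl fun i _ => by ring
  · rw [← h3, Matrix.mul_assoc]
    ext a b
    simp only [H3, mul_apply, transpose_apply, of_apply, pow_add, diagonal_apply, ite_mul,
      zero_mul, Finset.sum_ite_eq, Finset.mem_univ, if_true]
    exact Finset.sum_congr rfl fun i _ => by ring

theorem exists_atomic_representation {y : ℕ → ℝ} (h3 : (H3 s y).PosSemidef)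
    (h4 : (H4 s y).PosSemidef) :
    ∃ t lam : Fin (H1 s y).rank → ℝ, Function.Injective t ∧ (∀ i, 0 < lam i) ∧
      (∀ i, t i ∈ Set.Icc (0 : ℝ) 1) ∧ ∀ k ≤ 2 * s + 1, y k = ∑ i, lam i * t i ^ k := by
  have h1 : (H1 s y).PosSemidef := H1_eq_H3_add_H4 y ▸ h3.add h4
  obtain ⟨W, hW, hWW⟩ := h1.exists_linearIndependent_rows_transpose_mul_self_eq
  obtain ⟨V, μ, hV, hVV, hVμV, hμ⟩ := exists_simultaneous_diagonalization hW h3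
    (by rwa [hWW, H1_eq_H3_add_H4, add_sub_cancel_left])
  obtain ⟨lam, hμinj, hlam, hmom⟩ := exists_atoms_of_H1_of_H3 hV (hVV.trans hWW) hVμV
  exact ⟨μ, lam, hμinj, hlam, hμ, hmom⟩

end Hankel

namespace Finsupp

variable {K : Type*} [Field K]

theorem eq_zero_of_linearCombination_pow_eq_zero {d : K →₀ K}
    (h : ∀ k < d.support.card, linearCombination K (· ^ k) d = 0) : d = 0 := by
  classical
  let e := d.support.equivFin
  have hd := Matrix.eq_zero_of_forall_pow_sum_mul_pow_eq_zero (f := fun j => (e.symm j : K))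
    (v := fun j => d (e.symm j)) (Subtype.val_injective.comp e.symm.injective) fun k => by
      rw [← h k k.isLt, linearCombination_apply, Finsupp.sum,
        ← Finset.sum_coe_sort d.support]
      exact e.symm.sum_comp fun a => d a * (a : K) ^ (k : ℕ)
  ext x
  by_contra hx
  exact hx (by simpa [e] using congrFun hd (e ⟨x, mem_support_iff.mpr hx⟩))

variable {ι : Type*} [Fintype ι]

theorem linearCombination_pow_sum_single (t lam : ι → K) (k : ℕ) :
    linearCombination K (· ^ k) (∑ i, single (t i) (lam i)) = ∑ i, lam i * t i ^ k := by
  simp [map_sum, linearCombination_single]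

theorem card_support_sum_single_le (t lam : ι → K) :
    (∑ i, single (t i) (lam i)).support.card ≤ Fintype.card ι := by
  classical
  calc _ ≤ (Finset.univ.image t).card := Finset.card_le_card fun x hx => ?_
    _ ≤ Fintype.card ι := Finset.card_image_le.trans_eq Finset.card_univ
  obtain ⟨i, -, hi⟩ := Finset.mem_biUnion.mp (support_finsetSum hx)
  exact Finset.mem_image.mpr
    ⟨i, Finset.mem_univ i, (Finset.mem_singleton.mp (support_single_subset hi)).symm⟩

theorem sum_single_apply_of_injective {t : ι → K} (ht : Function.Injective t) (lam : ι → K)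
    (i : ι) : (∑ j, single (t j) (lam j)) (t i) = lam i := by
  classical
  simp [finsetSum_apply, Finsupp.single_apply, ht.eq_iff]

end Finsupp

section Uniqueness

open Finsupp

variable {K : Type*} [Field K] {ι : Type*} [Fintype ι]

theorem exists_perm_of_sum_mul_pow_eq {n : ℕ} (hn : 2 * Fintype.card ι ≤ n)
    {t lam t' lam' : ι → K} (ht : Function.Injective t) (ht' : Function.Injective t')
    (hlam : ∀ i, lam i ≠ 0) (h : ∀ k < n, ∑ i, lam i * t i ^ k = ∑ i, lam' i * t' i ^ k) :
    ∃ σ : Equiv.Perm ι, ∀ i, t' (σ i) = t i ∧ lam' (σ i) = lam i := by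
  classical
  set μ := ∑ i, single (t i) (lam i)
  set μ' := ∑ i, single (t' i) (lam' i)
  have hμ : μ = μ' := by
    rw [← sub_eq_zero]
    refine eq_zero_of_linearCombination_pow_eq_zero fun k hk => ?_
    have hkn : k < n := calc
      k < (μ - μ').support.card := hk
      _ ≤ μ.support.card + μ'.support.card :=
        (Finset.card_le_card support_sub).trans (Finset.card_union_le _ _)
      _ ≤ n := by linarith [card_support_sum_single_le t lam, card_support_sum_single_le t' lam']
    rw [map_sub, linearCombination_pow_sum_single, linearCombination_pow_sum_single, h k hkn,
      sub_self]
  have hτ : ∀ i, ∃ j, t' j = t i ∧ lam' j = lam i := by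
    intro i
    have hi : μ' (t i) = lam i := hμ ▸ sum_single_apply_of_injective ht lam i
    obtain ⟨j, hj⟩ : ∃ j, t' j = t i := by
      by_contra! hne
      simp only [μ', finsetSum_apply, single_eq_of_ne' (hne _), Finset.sum_const_zero] at hi
      exact hlam i hi.symm
    exact ⟨j, hj, by rw [← hi, ← hj, sum_single_apply_of_injective ht' lam' j]⟩
  choose τ hτt hτlam using hτ
  have hτ_inj : Function.Injective τ := fun i j hij => ht (by rw [← hτt i, ← hτt j, hij])
  exact ⟨Equiv.ofBijective τ (Finite.injective_iff_bijective.mp hτ_inj),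
    fun i => ⟨hτt i, hτlam i⟩⟩

end Uniqueness

theorem stmt14_general (s : ℕ) (y : ℕ → ℝ)
    (h3 : (H3 s y).PosSemidef) (h4 : (H4 s y).PosSemidef)
    (r : ℕ) (hr : r = (H1 s y).rank) :
    ∃ t lam : Fin r → ℝ,
      Function.Injective t ∧ (∀ i, 0 < lam i) ∧ (∀ i, t i ∈ Set.Icc (0 : ℝ) 1) ∧
      (∀ k ≤ 2 * s + 1, y k = ∑ i, lam i * t i ^ k) ∧
      ∀ t' lam' : Fin r → ℝ,
        Function.Injective t' → (∀ i, 0 < lam' i) →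
        (∀ k ≤ 2 * s + 1, y k = ∑ i, lam' i * t' i ^ k) →
        ∃ σ : Equiv.Perm (Fin r), ∀ i, t' (σ i) = t i ∧ lam' (σ i) = lam i := by
  subst hr
  obtain ⟨t, lam, ht, hlam, ht01, hmom⟩ := exists_atomic_representation h3 h4
  refine ⟨t, lam, ht, hlam, ht01, hmom, fun t' lam' ht' _ hmom' => ?_⟩
  have hrank : 2 * Fintype.card (Fin (H1 s y).rank) ≤ 2 * s + 2 := by
    have := (H1 s y).rank_le_card_width
    simp only [Fintype.card_fin] at this ⊢
    omega
  exact exists_perm_of_sum_mul_pow_eq hrank ht ht' (fun i => (hlam i).ne') fun k hk => by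
    rw [← hmom k (by omega), ← hmom' k (by omega)]

/-- if `y_0 > 0`, `H₃(y) ⪰ 0`, `H₄(y) ⪰ 0` and `r = rank H₁(y)`, then
`y` has a unique `r`-atomic representing measure, whose support lies in `[0,1]`. -/
theorem stmt14 (s : ℕ) (y : ℕ → ℝ) (h0 : 0 < y 0)
    (h3 : (H3 s y).PosSemidef) (h4 : (H4 s y).PosSemidef)
    (r : ℕ) (hr : r = (H1 s y).rank) :
    ∃ t lam : Fin r → ℝ,
      Function.Injective t ∧ (∀ i, 0 < lam i) ∧ (∀ i, t i ∈ Set.Icc (0 : ℝ) 1) ∧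
      (∀ k ≤ 2 * s + 1, y k = ∑ i, lam i * t i ^ k) ∧
      ∀ t' lam' : Fin r → ℝ,
        Function.Injective t' → (∀ i, 0 < lam' i) →
        (∀ k ≤ 2 * s + 1, y k = ∑ i, lam' i * t' i ^ k) →
        ∃ σ : Equiv.Perm (Fin r), ∀ i, t' (σ i) = t i ∧ lam' (σ i) = lam i :=
  stmt14_general s y h3 h4 r hr
end
end

section
/- Let y = (y_0,...,y_{2s}) with y_0 > 0 admit a representing measure supported in [0,1], and suppose rank H_1(y) = s+1 where H_1(y) = (y_{i+j})_{0≤i,j≤s}. Define l and u as the minimal and maximal t ∈ R such that the extended sequence (y_0,...,y_{2s},t) admits a representing measure in [0,1]. Then the (s+1)-atomic representing measure of y supported in [0,1] is unique if and only if l = u. -/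
open Matrix MeasureTheory Set

noncomputable section

/-!
Let `L` be the Riesz functional of the moments of `μ` on `[0, 1]`. Since `H₁(y)` is nondegenerate,
`L` is positive on nonzero squares of degree `≤ s`, so `μ` charges more than `s` points. For the
weight `a (x - w₀)`, i.e. `x` (`w₀ = 0`) or `1 - x` (`w₀ = 1`), the monic orthogonal polynomial `g`
of degree `s` has `s` simple roots in `[0, 1] \ {w₀}`; with `w₀` they are the nodes of a
Gauss–Radau quadrature for `L`, exact up to degree `2s` with positive weights, i.e. an
`(s+1)`-atomic representing measure of `y`. Testing the extended `H₃`, resp. `H₄`, against the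
coefficients of `g` shows that the `(2s+1)`-st moment of the lower, resp. upper, Radau measure is
`l`, resp. `u`, while that of every `(s+1)`-atomic representing measure in `[0, 1]` lies in
`[l, u]`. So uniqueness forces `l = u`; conversely, if `l = u`, all such measures share their
moments up to order `2s+1`, and these determine an `(s+1)`-atomic measure.
-/

open Polynomial

lemma Matrix.eq_zero_of_mulVec_eq_zero_of_rank_eq {K ι : Type*} [Field K] [Fintype ι]
    {A : Matrix ι ι K} (hA : A.rank = Fintype.card ι) {c : ι → K} (hc : A *ᵥ c = 0) : c = 0 := by
  have h := LinearMap.finrank_range_add_finrank_ker A.mulVecLin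
  rw [← Matrix.rank, hA, Module.finrank_fintype_fun_eq_card] at h
  have hker : LinearMap.ker A.mulVecLin = ⊥ := Submodule.finrank_eq_zero.mp (by omega)
  exact LinearMap.ker_eq_bot'.mp hker c hc

lemma mul_pos_of_continuousOn_ne_zero {f : ℝ → ℝ} {a b : ℝ} (hf : ContinuousOn f (uIcc a b))
    (hne : ∀ x ∈ uIcc a b, f x ≠ 0) : 0 < f a * f b := by
  by_contra! hab
  have h0 : (0 : ℝ) ∈ uIcc (f a) (f b) := by
    rw [mem_uIcc]
    rcases mul_nonpos_iff.mp hab with h | h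
    · exact Or.inr ⟨h.2, h.1⟩
    · exact Or.inl h
  obtain ⟨c, hc, hfc⟩ := intermediate_value_uIcc hf h0
  exact hne c hc hfc

section Quadrature

variable {K : Type*} [Field K]

/-- The orthogonal polynomial is `X ^ n` minus the representative of `r ↦ Λ (r * X ^ n)` for the
nondegenerate bilinear form `(q, r) ↦ Λ (q * r)` on polynomials of degree `< n`. -/
lemma exists_monic_orthogonal (Λ : K[X] →ₗ[K] K) (n : ℕ)
    (hΛ : ∀ q : K[X], q ≠ 0 → q.degree < n → Λ (q * q) ≠ 0) :
    ∃ g : K[X], g.Monic ∧ g.natDegree = n ∧ ∀ q : K[X], q.degree < n → Λ (q * g) = 0 := by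
  have : FiniteDimensional K (degreeLT K n) := (degreeLTEquiv K n).symm.finiteDimensional
  let B : LinearMap.BilinForm K (degreeLT K n) :=
    ((LinearMap.mul K K[X]).compr₂ Λ).compl₁₂ (degreeLT K n).subtype (degreeLT K n).subtype
  have hanis (q : degreeLT K n) (hq : B q q = 0) : q = 0 := by
    by_contra hne
    exact hΛ q (by simpa using hne) (mem_degreeLT.mp q.2) hq
  have hB : B.Nondegenerate :=
    ⟨fun q h => hanis q (h q), fun r h => hanis r (h r)⟩
  let f : Module.Dual K (degreeLT K n) :=
    Λ ∘ₗ LinearMap.mulRight K (X ^ n) ∘ₗ (degreeLT K n).subtype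
  set q₀ := (B.toDual hB).symm f
  have hq₀ (r : degreeLT K n) : Λ ((q₀ : K[X]) * r) = Λ ((r : K[X]) * X ^ n) :=
    LinearMap.BilinForm.apply_toDual_symm_apply (hB := hB) f r
  have hdeg : (q₀ : K[X]).degree < n := mem_degreeLT.mp q₀.2
  refine ⟨X ^ n - (q₀ : K[X]), monic_X_pow_sub hdeg, natDegree_eq_of_degree_eq_some ?_,
    fun q hq => ?_⟩
  · rw [degree_sub_eq_left_of_degree_lt (by rwa [degree_X_pow]), degree_X_pow]
  · rw [mul_sub, map_sub, mul_comm q (q₀ : K[X]), hq₀ ⟨q, mem_degreeLT.mpr hq⟩, sub_self]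

variable {ι : Type*} [Fintype ι] [DecidableEq ι]

lemma sum_mul_eval_lagrange_basis {t : ι → K} (ht : Function.Injective t) (c : ι → K) (j : ι) :
    ∑ i, c i * (Lagrange.basis Finset.univ t j).eval (t i) = c j := by
  rw [Finset.sum_eq_single j]
  · simp [Lagrange.eval_basis_self ht.injOn (Finset.mem_univ j)]
  · intro i _ hij
    simp [Lagrange.eval_basis_of_ne hij.symm (Finset.mem_univ i)]
  · simp

lemma natDegree_lagrange_basis_add_one {t : ι → K} (ht : Function.Injective t) (j : ι) :
    (Lagrange.basis Finset.univ t j).natDegree + 1 = Fintype.card ι := by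
  have := Fintype.card_pos_iff.mpr ⟨j⟩
  rw [Lagrange.natDegree_basis ht.injOn (Finset.mem_univ j), Finset.card_univ]
  omega

/-- Dividing `p` by `N`, the quotient term is annihilated and the remainder is its own Lagrange
interpolant on the nodes. -/
lemma quadrature_exact (Λ : K[X] →ₗ[K] K) {t : ι → K} (ht : Function.Injective t) {N : K[X]}
    (hN : N.Monic) (hNdeg : N.natDegree = Fintype.card ι) (hNt : ∀ i, N.eval (t i) = 0)
    {d : ℕ} (horth : ∀ q : K[X], q.degree < d → Λ (N * q) = 0)
    {p : K[X]} (hp : p.natDegree < Fintype.card ι + d) :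
    Λ p = ∑ i, Λ (Lagrange.basis Finset.univ t i) * p.eval (t i) := by
  have hquot : (p /ₘ N).degree < d := by
    rcases eq_or_ne (p /ₘ N) 0 with h | h
    · simp [h]
    have hNp : N.natDegree ≤ p.natDegree :=
      natDegree_le_natDegree (not_lt.mp (mt (divByMonic_eq_zero_iff hN).mpr h))
    have : (p /ₘ N).natDegree < d := by
      rw [natDegree_divByMonic p hN]
      omega
    exact degree_le_natDegree.trans_lt (by exact_mod_cast this)
  have hrem : p %ₘ N = Lagrange.interpolate Finset.univ t (fun i => p.eval (t i)) := by
    rw [Lagrange.eq_interpolate (f := p %ₘ N) ht.injOn]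
    · congr 1
      funext i
      conv_rhs => rw [← modByMonic_add_div p N]
      simp [hNt]
    · rw [Finset.card_univ, ← hNdeg, ← degree_eq_natDegree hN.ne_zero]
      exact degree_modByMonic_lt p hN
  calc Λ p = Λ (p %ₘ N) + Λ (N * (p /ₘ N)) := by rw [← map_add, modByMonic_add_div p N]
    _ = ∑ i, Λ (Lagrange.basis Finset.univ t i) * p.eval (t i) := by
      rw [horth _ hquot, add_zero, hrem, Lagrange.interpolate_apply, map_sum]
      refine Finset.sum_congr rfl fun i _ => ?_
      rw [← smul_eq_C_mul, map_smul, smul_eq_mul, mul_comm]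

lemma quadrature_weight_eq (Λ : K[X] →ₗ[K] K) {t : ι → K} (ht : Function.Injective t) {N : K[X]}
    (hN : N.Monic) (hNdeg : N.natDegree = Fintype.card ι) (hNt : ∀ i, N.eval (t i) = 0)
    {d : ℕ} (horth : ∀ q : K[X], q.degree < d → Λ (N * q) = 0) (hd : Fintype.card ι ≤ d + 1)
    (i : ι) :
    Λ (Lagrange.basis Finset.univ t i) =
      Λ (Lagrange.basis Finset.univ t i * Lagrange.basis Finset.univ t i) := by
  have hdeg := natDegree_mul_le (p := Lagrange.basis Finset.univ t i)
    (q := Lagrange.basis Finset.univ t i)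
  have := natDegree_lagrange_basis_add_one ht i
  conv_rhs => rw [quadrature_exact Λ ht hN hNdeg hNt horth (by omega)]
  simp_rw [eval_mul, ← mul_assoc]
  rw [sum_mul_eval_lagrange_basis ht, Lagrange.eval_basis_self ht.injOn (Finset.mem_univ i),
    mul_one]

end Quadrature

def rieszFunctional (x : ℕ → ℝ) : ℝ[X] →ₗ[ℝ] ℝ :=
  Polynomial.lsum fun k => x k • LinearMap.id

@[simp]
lemma rieszFunctional_monomial (x : ℕ → ℝ) (k : ℕ) (a : ℝ) :
    rieszFunctional x (monomial k a) = a * x k := by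
  simp [rieszFunctional, mul_comm]

lemma rieszFunctional_X_pow (x : ℕ → ℝ) (k : ℕ) : rieszFunctional x (X ^ k) = x k := by
  simp [← monomial_one_right_eq_X_pow]

lemma rieszFunctional_eq_sum_range (x : ℕ → ℝ) {p : ℝ[X]} {n : ℕ} (hp : p.natDegree < n) :
    rieszFunctional x p = ∑ k ∈ Finset.range n, p.coeff k * x k := by
  change p.sum (fun k a => x k • a) = _
  rw [sum_over_range' _ (fun _ => smul_zero _) n hp]
  simp [mul_comm]

lemma rieszFunctional_atomic {ι : Type*} [Fintype ι] (t lam : ι → ℝ) (p : ℝ[X]) :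
    rieszFunctional (fun k => ∑ i, lam i * t i ^ k) p = ∑ i, lam i * p.eval (t i) := by
  induction p using Polynomial.induction_on' with
  | add p q hp hq => simp [hp, hq, mul_add, Finset.sum_add_distrib]
  | monomial k a => simp [Finset.mul_sum, mul_left_comm]

lemma rieszFunctional_eq_of_natDegree_le {x x' : ℕ → ℝ} {n : ℕ} (h : ∀ k ≤ n, x k = x' k)
    {p : ℝ[X]} (hp : p.natDegree ≤ n) : rieszFunctional x p = rieszFunctional x' p := by
  rw [rieszFunctional_eq_sum_range x (Nat.lt_succ_of_le hp),
    rieszFunctional_eq_sum_range x' (Nat.lt_succ_of_le hp)]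
  exact Finset.sum_congr rfl fun k hk => by rw [h k (Nat.le_of_lt_succ (Finset.mem_range.mp hk))]

def locHankel (s : ℕ) (w : ℝ[X]) (x : ℕ → ℝ) : Matrix (Fin (s + 1)) (Fin (s + 1)) ℝ :=
  Matrix.of fun i j => rieszFunctional x (w * X ^ ((i : ℕ) + j))

lemma H1_eq_locHankel (s : ℕ) (x : ℕ → ℝ) : H1 s x = locHankel s 1 x := by
  ext i j; simp [H1, locHankel, rieszFunctional_X_pow]

lemma H3_eq_locHankel (s : ℕ) (x : ℕ → ℝ) : H3 s x = locHankel s X x := by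
  ext i j; simp [H3, locHankel, ← pow_succ', rieszFunctional_X_pow]

lemma H4_eq_locHankel (s : ℕ) (x : ℕ → ℝ) : H4 s x = locHankel s (1 - X) x := by
  ext i j; simp [H4, locHankel, sub_mul, ← pow_succ', rieszFunctional_X_pow]

lemma dotProduct_locHankel_mulVec (s : ℕ) (w : ℝ[X]) (x : ℕ → ℝ) (c : Fin (s + 1) → ℝ) :
    c ⬝ᵥ locHankel s w x *ᵥ c = rieszFunctional x (w * ofFn (s + 1) c ^ 2) := by
  rw [ofFn_eq_sum_monomial, sq, Finset.sum_mul_sum]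
  simp only [Finset.mul_sum, map_sum, dotProduct, mulVec, locHankel, Matrix.of_apply]
  refine Finset.sum_congr rfl fun i _ => Finset.sum_congr rfl fun j _ => ?_
  rw [monomial_mul_monomial, ← C_mul_X_pow_eq_monomial, ← smul_eq_C_mul, mul_smul_comm,
    map_smul, smul_eq_mul]
  ring

lemma locHankel_posSemidef_iff (s : ℕ) (w : ℝ[X]) (x : ℕ → ℝ) :
    (locHankel s w x).PosSemidef ↔
      ∀ g : ℝ[X], g.natDegree ≤ s → 0 ≤ rieszFunctional x (w * g ^ 2) := by
  rw [Matrix.posSemidef_iff_dotProduct_mulVec]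
  have hsymm : (locHankel s w x).IsHermitian := by
    ext i j; simp [locHankel, add_comm]
  simp only [hsymm, star_trivial, dotProduct_locHankel_mulVec, true_and]
  constructor
  · intro h g hg
    simpa [ofFn_comp_toFn_eq_id_of_natDegree_lt (Nat.lt_succ_of_le hg)] using h (toFn (s + 1) g)
  · exact fun h c => h _ (Nat.le_of_lt_succ (ofFn_natDegree_lt (Nat.succ_pos s) c))

lemma sum_mul_eval_eq_of_sum_pow_eq {ι κ : Type*} [Fintype ι] [Fintype κ]
    {t₁ lam₁ : ι → ℝ} {t₂ lam₂ : κ → ℝ} {n : ℕ}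
    (hmom : ∀ k < n, ∑ i, lam₁ i * t₁ i ^ k = ∑ i, lam₂ i * t₂ i ^ k)
    {p : ℝ[X]} (hp : p.natDegree < n) :
    ∑ i, lam₁ i * p.eval (t₁ i) = ∑ i, lam₂ i * p.eval (t₂ i) := by
  rw [← rieszFunctional_atomic, ← rieszFunctional_atomic, rieszFunctional_eq_sum_range _ hp,
    rieszFunctional_eq_sum_range _ hp]
  exact Finset.sum_congr rfl fun k hk => by rw [hmom k (Finset.mem_range.mp hk)]

section AtomicUniqueness

variable {ι : Type*} [Fintype ι] [DecidableEq ι] {t₁ lam₁ t₂ lam₂ : ι → ℝ}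
  (hmom : ∀ k < 2 * Fintype.card ι, ∑ i, lam₁ i * t₁ i ^ k = ∑ i, lam₂ i * t₂ i ^ k)
include hmom

/-- Both rules integrate `N * ℓ`, with `N` the node polynomial of `t₁` and `ℓ` the Lagrange basis
polynomial of `t₂ j`; the first rule gives `0`, the second `lam₂ j * N (t₂ j)`. -/
lemma exists_eq_of_sum_pow_eq (ht₂ : Function.Injective t₂) {j : ι} (hlam₂ : lam₂ j ≠ 0) :
    ∃ i, t₁ i = t₂ j := by
  by_contra! hne
  set N : ℝ[X] := ∏ i, (X - C (t₁ i))
  have hNdeg : N.natDegree = Fintype.card ι := by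
    rw [natDegree_prod_of_monic _ _ fun i _ => monic_X_sub_C (t₁ i)]
    simp
  have hN₁ (i : ι) : N.eval (t₁ i) = 0 := by
    rw [eval_prod]
    exact Finset.prod_eq_zero (Finset.mem_univ i) (by simp)
  have hNj : N.eval (t₂ j) ≠ 0 := by
    simp [N, eval_prod, Finset.prod_ne_zero_iff, sub_eq_zero, fun i => (hne i).symm]
  have hdeg := natDegree_mul_le (p := N) (q := Lagrange.basis Finset.univ t₂ j)
  have h := sum_mul_eval_eq_of_sum_pow_eq hmom
    (hdeg.trans_lt (by have := natDegree_lagrange_basis_add_one ht₂ j; omega))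
  simp_rw [eval_mul, ← mul_assoc] at h
  rw [sum_mul_eval_lagrange_basis ht₂] at h
  simp only [hN₁, mul_zero, zero_mul, Finset.sum_const_zero] at h
  exact mul_ne_zero hlam₂ hNj h.symm

theorem exists_perm_of_sum_pow_eq (ht₁ : Function.Injective t₁) (ht₂ : Function.Injective t₂)
    (hlam₂ : ∀ i, lam₂ i ≠ 0) :
    ∃ σ : Equiv.Perm ι, ∀ i, t₂ (σ i) = t₁ i ∧ lam₂ (σ i) = lam₁ i := by
  choose τ hτ using fun j => exists_eq_of_sum_pow_eq hmom ht₂ (hlam₂ j)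
  have hτ_inj : Function.Injective τ := fun j j' h => ht₂ (by rw [← hτ j, ← hτ j', h])
  set σ := (Equiv.ofBijective τ hτ_inj.bijective_of_finite).symm
  have hσ (i : ι) : t₂ (σ i) = t₁ i := by
    rw [← hτ]
    exact congrArg t₁ ((Equiv.ofBijective τ _).apply_symm_apply i)
  refine ⟨σ, fun i => ⟨hσ i, ?_⟩⟩
  have h := sum_mul_eval_eq_of_sum_pow_eq hmom (p := Lagrange.basis Finset.univ t₁ i)
    (by have := natDegree_lagrange_basis_add_one ht₁ i; omega)
  rw [sum_mul_eval_lagrange_basis ht₁, ← σ.sum_comp] at h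
  simp_rw [hσ] at h
  rw [sum_mul_eval_lagrange_basis ht₁] at h
  exact h.symm

end AtomicUniqueness

section Extension

variable {ι : Type*} [Fintype ι] {s : ℕ} {y : ℕ → ℝ} {t lam : ι → ℝ}
  (hmom : ∀ k ≤ 2 * s, y k = ∑ i, lam i * t i ^ k)
include hmom

lemma rieszFunctional_extend (T : ℝ) {p : ℝ[X]} (hp : p.natDegree ≤ 2 * s + 1) :
    rieszFunctional (fun k => if k = 2 * s + 1 then T else y k) p =
      ∑ i, lam i * p.eval (t i) + (T - ∑ i, lam i * t i ^ (2 * s + 1)) * p.coeff (2 * s + 1) := by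
  have hlt : p.natDegree < 2 * s + 1 + 1 := Nat.lt_succ_of_le hp
  have hlow : ∑ k ∈ Finset.range (2 * s + 1), p.coeff k * (if k = 2 * s + 1 then T else y k) =
      ∑ k ∈ Finset.range (2 * s + 1), p.coeff k * ∑ i, lam i * t i ^ k :=
    Finset.sum_congr rfl fun k hk => by
      have hk := Finset.mem_range.mp hk
      rw [if_neg hk.ne, hmom k (by omega)]
  rw [← rieszFunctional_atomic, rieszFunctional_eq_sum_range _ hlt,
    rieszFunctional_eq_sum_range _ hlt, Finset.sum_range_succ _ (2 * s + 1),
    Finset.sum_range_succ _ (2 * s + 1), if_pos rfl, hlow]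
  ring

lemma rieszFunctional_extend_mul_sq (T : ℝ) {w g : ℝ[X]} (hw : w.natDegree ≤ 1)
    (hg : g.natDegree ≤ s) :
    rieszFunctional (fun k => if k = 2 * s + 1 then T else y k) (w * g ^ 2) =
      ∑ i, lam i * (w.eval (t i) * g.eval (t i) ^ 2) +
        (T - ∑ i, lam i * t i ^ (2 * s + 1)) * (w.coeff 1 * g.coeff s ^ 2) := by
  have hg2 : (g ^ 2).natDegree ≤ 2 * s := natDegree_pow_le.trans (by omega)
  rw [rieszFunctional_extend hmom T (natDegree_mul_le.trans (by omega)),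
    show 2 * s + 1 = 1 + 2 * s by ring, coeff_mul_add_eq_of_natDegree_le hw hg2,
    show 2 * s = s + s by ring, sq, coeff_mul_add_eq_of_natDegree_le hg hg]
  simp [sq]

lemma posSemidef_locHankel_extend {w : ℝ[X]} (hw : w.natDegree ≤ 1)
    (hwt : ∀ i, 0 ≤ lam i * w.eval (t i)) :
    (locHankel s w
      (fun k => if k = 2 * s + 1 then ∑ i, lam i * t i ^ (2 * s + 1) else y k)).PosSemidef := by
  rw [locHankel_posSemidef_iff]
  intro g hg
  rw [rieszFunctional_extend_mul_sq hmom _ hw hg, sub_self, zero_mul, add_zero]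
  exact Finset.sum_nonneg fun i _ => by rw [← mul_assoc]; exact mul_nonneg (hwt i) (sq_nonneg _)

lemma le_of_posSemidef_locHankel_extend {w g : ℝ[X]} (hw : w.natDegree ≤ 1) (hg : g.Monic)
    (hgdeg : g.natDegree = s) (hnodes : ∀ i, w.eval (t i) * g.eval (t i) = 0) {T : ℝ}
    (hT : (locHankel s w (fun k => if k = 2 * s + 1 then T else y k)).PosSemidef) :
    0 ≤ (T - ∑ i, lam i * t i ^ (2 * s + 1)) * w.coeff 1 := by
  have := (locHankel_posSemidef_iff s w _).mp hT g hgdeg.le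
  have hlead : g.coeff s = 1 := hgdeg ▸ hg.coeff_natDegree
  rw [rieszFunctional_extend_mul_sq hmom _ hw hgdeg.le, hlead] at this
  simpa [sq, ← mul_assoc, hnodes] using this

end Extension

section Bounds

variable {ι : Type*} [Fintype ι] {s : ℕ} {y : ℕ → ℝ} {t lam : ι → ℝ}
  (hmom : ∀ k ≤ 2 * s, y k = ∑ i, lam i * t i ^ k) (hlam : ∀ i, 0 ≤ lam i)
include hmom hlam

lemma posSemidef_H3_extend (ht : ∀ i, 0 ≤ t i) :
    (H3 s (fun k => if k = 2 * s + 1 then ∑ i, lam i * t i ^ (2 * s + 1) else y k)).PosSemidef := by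
  rw [H3_eq_locHankel]
  exact posSemidef_locHankel_extend hmom natDegree_X_le fun i => by
    simpa using mul_nonneg (hlam i) (ht i)

lemma posSemidef_H4_extend (ht : ∀ i, t i ≤ 1) :
    (H4 s (fun k => if k = 2 * s + 1 then ∑ i, lam i * t i ^ (2 * s + 1) else y k)).PosSemidef := by
  rw [H4_eq_locHankel]
  exact posSemidef_locHankel_extend hmom (natDegree_sub_le_of_le natDegree_one.le natDegree_X_le)
    fun i => by simpa using mul_nonneg (hlam i) (sub_nonneg.mpr (ht i))

lemma isLeast_H3_extend (ht : ∀ i, 0 ≤ t i) {g : ℝ[X]} (hg : g.Monic) (hgdeg : g.natDegree = s)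
    (hnodes : ∀ i, t i * g.eval (t i) = 0) :
    IsLeast {T | (H3 s (fun k => if k = 2 * s + 1 then T else y k)).PosSemidef}
      (∑ i, lam i * t i ^ (2 * s + 1)) := by
  refine ⟨posSemidef_H3_extend hmom hlam ht, fun T hT => ?_⟩
  change (H3 s _).PosSemidef at hT
  rw [H3_eq_locHankel] at hT
  simpa using le_of_posSemidef_locHankel_extend hmom natDegree_X_le hg hgdeg
    (by simpa using hnodes) hT

lemma isGreatest_H4_extend (ht : ∀ i, t i ≤ 1) {g : ℝ[X]} (hg : g.Monic) (hgdeg : g.natDegree = s)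
    (hnodes : ∀ i, (1 - t i) * g.eval (t i) = 0) :
    IsGreatest {T | (H4 s (fun k => if k = 2 * s + 1 then T else y k)).PosSemidef}
      (∑ i, lam i * t i ^ (2 * s + 1)) := by
  refine ⟨posSemidef_H4_extend hmom hlam ht, fun T hT => ?_⟩
  change (H4 s _).PosSemidef at hT
  rw [H4_eq_locHankel] at hT
  simpa [coeff_one] using le_of_posSemidef_locHankel_extend hmom
    (natDegree_sub_le_of_le natDegree_one.le natDegree_X_le) hg hgdeg (by simpa using hnodes) hT

end Bounds

section Measure

variable {μ : Measure ℝ} [IsFiniteMeasure μ]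

def unitIntervalMoments (μ : Measure ℝ) (k : ℕ) : ℝ := ∫ x in Icc (0 : ℝ) 1, x ^ k ∂μ

lemma rieszFunctional_unitIntervalMoments (p : ℝ[X]) :
    rieszFunctional (unitIntervalMoments μ) p = ∫ x in Icc (0 : ℝ) 1, p.eval x ∂μ := by
  induction p using Polynomial.induction_on' with
  | add p q hp hq =>
    rw [map_add, hp, hq, ← integral_add p.continuous.integrableOn_Icc
      q.continuous.integrableOn_Icc]
    simp
  | monomial k a => simp [unitIntervalMoments, integral_const_mul]

lemma rieszFunctional_unitIntervalMoments_nonneg {p : ℝ[X]}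
    (hp : ∀ x ∈ Icc (0 : ℝ) 1, 0 ≤ p.eval x) :
    0 ≤ rieszFunctional (unitIntervalMoments μ) p := by
  rw [rieszFunctional_unitIntervalMoments]
  exact setIntegral_nonneg measurableSet_Icc hp

/-- Otherwise `μ` would be carried by the at most `s` zeros of `p * h ^ 2` in `[0, 1]`, and the
square of the monic polynomial vanishing there would be annihilated. -/
lemma rieszFunctional_mul_sq_pos {s : ℕ}
    (hμ : ∀ q : ℝ[X], q ≠ 0 → q.natDegree ≤ s →
      0 < rieszFunctional (unitIntervalMoments μ) (q ^ 2))
    {p h : ℝ[X]} (hh : h ≠ 0) (hp : ∀ x ∈ Icc (0 : ℝ) 1, 0 ≤ p.eval x) {T : Finset ℝ}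
    (hT : ∀ x ∈ Icc (0 : ℝ) 1, p.eval x = 0 → x ∈ T) (hcard : T.card + h.natDegree ≤ s) :
    0 < rieszFunctional (unitIntervalMoments μ) (p * h ^ 2) := by
  set S := T ∪ h.roots.toFinset
  set q : ℝ[X] := ∏ z ∈ S, (X - C z)
  have hq : q.Monic := monic_prod_of_monic _ _ fun z _ => monic_X_sub_C z
  have hqdeg : q.natDegree ≤ s := by
    rw [natDegree_prod_of_monic _ _ fun z _ => monic_X_sub_C z]
    simp only [natDegree_X_sub_C, Finset.sum_const, smul_eq_mul, mul_one]
    calc S.card ≤ T.card + h.roots.toFinset.card := Finset.card_union_le _ _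
      _ ≤ T.card + h.natDegree := by
        gcongr; exact (Multiset.toFinset_card_le _).trans (card_roots' h)
      _ ≤ s := hcard
  have hpos : ∀ x ∈ Icc (0 : ℝ) 1, 0 ≤ (p * h ^ 2).eval x := fun x hx => by
    rw [eval_mul, eval_pow]; exact mul_nonneg (hp x hx) (sq_nonneg _)
  refine (rieszFunctional_unitIntervalMoments_nonneg hpos).lt_of_ne fun h0 => ?_
  rw [rieszFunctional_unitIntervalMoments, eq_comm, setIntegral_eq_zero_iff_of_nonneg_ae
    ((ae_restrict_mem measurableSet_Icc).mono hpos) (p * h ^ 2).continuous.integrableOn_Icc] at h0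
  have hq0 : ∀ᵐ x ∂μ.restrict (Icc 0 1), (q ^ 2).eval x = 0 := by
    filter_upwards [h0, ae_restrict_mem measurableSet_Icc] with x hx hxI
    simp only [eval_mul, eval_pow, Pi.zero_apply, mul_eq_zero, pow_eq_zero_iff two_ne_zero] at hx
    have hxS : x ∈ S := by
      rcases hx with hx | hx
      · exact Finset.mem_union_left _ (hT x hxI hx)
      · exact Finset.mem_union_right _ (by simp [hh, hx])
    simp [q, eval_prod, Finset.prod_eq_zero hxS]
  refine (hμ q hq.ne_zero hqdeg).ne' ?_
  rw [rieszFunctional_unitIntervalMoments]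
  exact integral_eq_zero_of_ae hq0

/-- A nonzero square annihilated by the Riesz functional would give a kernel vector of the
positive semidefinite matrix `H₁(y)`. -/
lemma rieszFunctional_sq_pos_of_rank {s : ℕ} {y : ℕ → ℝ}
    (hy : ∀ k ≤ 2 * s, y k = unitIntervalMoments μ k) (hrank : (H1 s y).rank = s + 1)
    {q : ℝ[X]} (hq : q ≠ 0) (hdeg : q.natDegree ≤ s) :
    0 < rieszFunctional (unitIntervalMoments μ) (q ^ 2) := by
  have hsq {g : ℝ[X]} (hg : g.natDegree ≤ s) :
      rieszFunctional y (1 * g ^ 2) = rieszFunctional (unitIntervalMoments μ) (g ^ 2) := by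
    rw [one_mul]
    exact rieszFunctional_eq_of_natDegree_le hy ((natDegree_pow_le).trans (by omega))
  have hpsd : (H1 s y).PosSemidef := by
    rw [H1_eq_locHankel, locHankel_posSemidef_iff]
    intro g hg
    rw [hsq hg]
    exact rieszFunctional_unitIntervalMoments_nonneg fun x _ => by simp only [eval_pow]; positivity
  refine (rieszFunctional_unitIntervalMoments_nonneg fun x _ => by
    simp only [eval_pow]; positivity).lt_of_ne fun h0 => hq ?_
  have hq' : ofFn (s + 1) (toFn (s + 1) q) = q :=
    ofFn_comp_toFn_eq_id_of_natDegree_lt (Nat.lt_succ_of_le hdeg)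
  have hform : toFn (s + 1) q ⬝ᵥ H1 s y *ᵥ toFn (s + 1) q = 0 := by
    rw [H1_eq_locHankel, dotProduct_locHankel_mulVec, hq', hsq hdeg, h0]
  have hker := (hpsd.dotProduct_mulVec_zero_iff _).mp (by simpa using hform)
  rw [← hq', Matrix.eq_zero_of_mulVec_eq_zero_of_rank_eq (by simpa using hrank) hker, map_zero]

end Measure

section Radau

variable {μ : Measure ℝ} [IsFiniteMeasure μ] {s : ℕ}
  (hμ : ∀ q : ℝ[X], q ≠ 0 → q.natDegree ≤ s →
    0 < rieszFunctional (unitIntervalMoments μ) (q ^ 2))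
  {a w₀ : ℝ} (ha : a ≠ 0) (hW : ∀ x ∈ Icc (0 : ℝ) 1, 0 ≤ a * (x - w₀))

include hμ ha hW in
lemma exists_radau_orthogonal :
    ∃ g : ℝ[X], g.Monic ∧ g.natDegree = s ∧ ∀ q : ℝ[X], q.degree < s →
      rieszFunctional (unitIntervalMoments μ) (C a * (X - C w₀) * (q * g)) = 0 := by
  refine exists_monic_orthogonal
    (rieszFunctional (unitIntervalMoments μ) ∘ₗ LinearMap.mulLeft ℝ (C a * (X - C w₀))) s
    fun q hq hdeg => ?_
  have hpos := rieszFunctional_mul_sq_pos hμ hq (p := C a * (X - C w₀)) (T := {w₀})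
    (by simpa using hW) (fun x _ hx => by simpa [ha, sub_eq_zero] using hx)
    (by rw [Finset.card_singleton]; have := (natDegree_lt_iff_degree_lt hq).mpr hdeg; omega)
  rw [LinearMap.comp_apply, LinearMap.mulLeft_apply, ← sq]
  exact hpos.ne'

variable {g : ℝ[X]} (hg : g.Monic) (hgdeg : g.natDegree = s)
  (horth : ∀ q : ℝ[X], q.degree < s →
    rieszFunctional (unitIntervalMoments μ) (C a * (X - C w₀) * (q * g)) = 0)

include hμ horth in
/-- `L (a (X - w₀) f h²) = L (a (X - w₀) h g) = 0`, which positivity forbids when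
`a (x - w₀) f(x)` has a constant sign `δ` and few zeros on `[0, 1]`. -/
lemma false_of_orthogonal_factor {f h : ℝ[X]} (hfh : g = f * h) (hh : h ≠ 0)
    (hdeg : h.natDegree < s) (δ : ℝ) (hδ : ∀ x ∈ Icc (0 : ℝ) 1, 0 ≤ δ * (a * (x - w₀)) * f.eval x)
    {T : Finset ℝ} (hT : ∀ x ∈ Icc (0 : ℝ) 1, δ * (a * (x - w₀)) * f.eval x = 0 → x ∈ T)
    (hcard : T.card + h.natDegree ≤ s) : False := by
  have hpos := rieszFunctional_mul_sq_pos hμ hh (p := C δ * (C a * (X - C w₀)) * f)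
    (by simpa using hδ) (by simpa using hT) hcard
  have hzero := horth h ((natDegree_lt_iff_degree_lt hh).mp hdeg)
  have hsplit : C δ * (C a * (X - C w₀)) * f * h ^ 2 = δ • (C a * (X - C w₀) * (h * g)) := by
    rw [hfh, smul_eq_C_mul]; ring
  rw [hsplit, map_smul, hzero, smul_zero] at hpos
  exact hpos.false

include hμ ha hW horth in
lemma false_of_orthogonal_factor_of_pos {f h : ℝ[X]} (hfh : g = f * h) (hh : h ≠ 0)
    (hdeg : h.natDegree < s) (δ : ℝ) (hδ : ∀ x ∈ Icc (0 : ℝ) 1, 0 < δ * f.eval x) : False := by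
  refine false_of_orthogonal_factor hμ horth hfh hh hdeg δ (T := {w₀})
    (fun x hx => ?_) (fun x hx h0 => ?_) (by rw [Finset.card_singleton]; omega)
  all_goals have hrw : δ * (a * (x - w₀)) * f.eval x = a * (x - w₀) * (δ * f.eval x) := by ring
  · rw [hrw]; exact mul_nonneg (hW x hx) (hδ x hx).le
  · rcases mul_eq_zero.mp (hrw ▸ h0) with h0 | h0
    · simp_all [sub_eq_zero]
    · exact absurd h0 (hδ x hx).ne'

include hμ ha hW hg hgdeg horth in
lemma mem_Icc_of_mem_roots {ρ : ℝ} (hρ : ρ ∈ g.roots) : ρ ∈ Icc (0 : ℝ) 1 ∧ ρ ≠ w₀ := by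
  have hfh : g = (X - C ρ) * (g /ₘ (X - C ρ)) :=
    (mul_divByMonic_eq_iff_isRoot.mpr (isRoot_of_mem_roots hρ)).symm
  set h := g /ₘ (X - C ρ)
  have hh : h ≠ 0 := by
    rintro h0; rw [h0, mul_zero] at hfh; exact hg.ne_zero hfh
  have hhdeg : h.natDegree + 1 = s := by
    rw [← hgdeg, hfh, natDegree_mul (X_sub_C_ne_zero ρ) hh, natDegree_X_sub_C, add_comm]
  by_contra hρ'
  by_cases hρw : ρ = w₀
  · subst hρw
    refine false_of_orthogonal_factor hμ horth hfh hh (by omega) a (T := {ρ})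
      (fun x _ => ?_) (fun x _ h0 => ?_) (by rw [Finset.card_singleton]; omega)
    · simp only [eval_sub, eval_X, eval_C]
      nlinarith [sq_nonneg (a * (x - ρ))]
    · simp only [eval_sub, eval_X, eval_C] at h0
      have : (a * (x - ρ)) ^ 2 = 0 := by rw [← h0]; ring
      simpa [ha, sub_eq_zero] using this
  · have hout : ρ < 0 ∨ 1 < ρ := by
      by_contra! h'; exact hρ' ⟨⟨h'.1, h'.2⟩, hρw⟩
    -- `-ρ (x - ρ) = ρ (ρ - x) > 0` on `[0, 1]`
    refine false_of_orthogonal_factor_of_pos hμ ha hW horth hfh hh (by omega) (-ρ)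
      (fun x hx => ?_)
    simp only [eval_sub, eval_X, eval_C]
    rcases hout with h' | h' <;> nlinarith [hx.1, hx.2]

include hμ ha hW hg hgdeg horth in
lemma roots_nodup : g.roots.Nodup := by
  classical
  rw [Multiset.nodup_iff_count_le_one]
  intro ρ
  by_contra! hcount
  obtain ⟨h, hfh⟩ : (X - C ρ) ^ 2 ∣ g :=
    (le_rootMultiplicity_iff hg.ne_zero).mp (by rw [← count_roots]; omega)
  have hh : h ≠ 0 := by
    rintro h0; rw [h0, mul_zero] at hfh; exact hg.ne_zero hfh
  have hhdeg : h.natDegree + 2 = s := by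
    rw [← hgdeg, hfh, natDegree_mul (pow_ne_zero 2 (X_sub_C_ne_zero ρ)) hh, natDegree_pow,
      natDegree_X_sub_C, add_comm]
  refine false_of_orthogonal_factor hμ horth hfh hh (by omega) 1 (T := {w₀, ρ})
    (fun x hx => ?_) (fun x _ h0 => ?_) (by have := Finset.card_le_two (a := w₀) (b := ρ); omega)
  · rw [one_mul, eval_pow]; exact mul_nonneg (hW x hx) (sq_nonneg _)
  · simp only [one_mul, eval_pow, eval_sub, eval_X, eval_C, mul_eq_zero,
      pow_eq_zero_iff two_ne_zero, sub_eq_zero, ha, false_or] at h0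
    rcases h0 with h0 | h0 <;> simp [h0]

include hμ ha hW hg hgdeg horth in
lemma card_roots_eq : Multiset.card g.roots = s := by
  obtain ⟨q, hPq, -, hq⟩ := exists_prod_multiset_X_sub_C_mul g
  set P := (g.roots.map fun a => X - C a).prod
  refine le_antisymm (hgdeg ▸ card_roots' g) (not_lt.mp fun hlt => ?_)
  have hq0 : q ≠ 0 := by
    rintro h0; rw [h0, mul_zero] at hPq; exact hg.ne_zero hPq.symm
  have hqne : ∀ x, q.eval x ≠ 0 := fun x hx => by
    simpa [hq] using (mem_roots hq0).mpr hx
  have hPdeg : P.natDegree = Multiset.card g.roots := natDegree_multiset_prod_X_sub_C_eq_card _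
  -- `q` has no real root, so it keeps the sign of `q 0` on `[0, 1]`
  refine false_of_orthogonal_factor_of_pos hμ ha hW horth (f := q) (h := P)
    (by rw [← hPq, mul_comm]) (fun h0 => by simp [h0] at hPq; exact hg.ne_zero hPq.symm)
    (by omega) (q.eval 0) (fun x hx => ?_)
  exact mul_pos_of_continuousOn_ne_zero q.continuous.continuousOn fun y _ => hqne y

include hμ ha hW hg hgdeg horth in
lemma exists_radau_nodes (hw₀ : w₀ ∈ Icc (0 : ℝ) 1) :
    ∃ t : Fin (s + 1) → ℝ, Function.Injective t ∧ (∀ i, t i ∈ Icc (0 : ℝ) 1) ∧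
      ∀ i, ((X - C w₀) * g).eval (t i) = 0 := by
  have hroots {ρ : ℝ} (hρ : ρ ∈ g.roots) := mem_Icc_of_mem_roots hμ ha hW hg hgdeg horth hρ
  set S := insert w₀ g.roots.toFinset
  have hS : S.card = s + 1 := by
    rw [Finset.card_insert_of_notMem fun h => (hroots (Multiset.mem_toFinset.mp h)).2 rfl,
      Multiset.toFinset_card_of_nodup (roots_nodup hμ ha hW hg hgdeg horth),
      card_roots_eq hμ ha hW hg hgdeg horth]
  refine ⟨fun i => S.orderIsoOfFin hS i,
    Subtype.val_injective.comp (S.orderIsoOfFin hS).injective, fun i => ?_, fun i => ?_⟩ <;>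
  dsimp only <;>
  rcases Finset.mem_insert.mp (S.orderIsoOfFin hS i).2 with h | h
  · rw [h]; exact hw₀
  · exact (hroots (Multiset.mem_toFinset.mp h)).1
  · simp [h]
  · rw [eval_mul, (isRoot_of_mem_roots (Multiset.mem_toFinset.mp h)).eq_zero, mul_zero]

include hμ ha hW in
theorem exists_radau_quadrature (hw₀ : w₀ ∈ Icc (0 : ℝ) 1) :
    ∃ g : ℝ[X], g.Monic ∧ g.natDegree = s ∧ ∃ t lam : Fin (s + 1) → ℝ,
      Function.Injective t ∧ (∀ i, t i ∈ Icc (0 : ℝ) 1) ∧ (∀ i, 0 < lam i) ∧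
      (∀ p : ℝ[X], p.natDegree ≤ 2 * s →
        rieszFunctional (unitIntervalMoments μ) p = ∑ i, lam i * p.eval (t i)) ∧
      ∀ i, a * (t i - w₀) * g.eval (t i) = 0 := by
  set L := rieszFunctional (unitIntervalMoments μ)
  obtain ⟨g, hg, hgdeg, horth⟩ := exists_radau_orthogonal hμ ha hW
  obtain ⟨t, ht, hI, hNt⟩ := exists_radau_nodes hμ ha hW hg hgdeg horth hw₀
  set N := (X - C w₀) * g
  have hN : N.Monic := (monic_X_sub_C w₀).mul hg
  have hNdeg : N.natDegree = Fintype.card (Fin (s + 1)) := by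
    rw [natDegree_mul (X_sub_C_ne_zero _) hg.ne_zero, natDegree_X_sub_C, hgdeg, Fintype.card_fin,
      add_comm]
  have hNorth (q : ℝ[X]) (hq : q.degree < s) : L (N * q) = 0 := by
    have : N * q = a⁻¹ • (C a * (X - C w₀) * (q * g)) := by
      rw [smul_eq_C_mul, show C a⁻¹ * (C a * (X - C w₀) * (q * g)) = C a⁻¹ * C a * (N * q) by ring,
        ← C_mul, inv_mul_cancel₀ ha, C_1, one_mul]
    rw [this, map_smul, horth q hq, smul_zero]
  refine ⟨g, hg, hgdeg, t, fun i => L (Lagrange.basis Finset.univ t i), ht, hI, fun i => ?_,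
    fun p hp => quadrature_exact L ht hN hNdeg hNt hNorth (by simp; omega), fun i => ?_⟩
  · show 0 < L (Lagrange.basis Finset.univ t i)
    rw [quadrature_weight_eq L ht hN hNdeg hNt hNorth (by simp), ← sq]
    exact hμ _ (Lagrange.basis_ne_zero ht.injOn (Finset.mem_univ i))
      (by have := natDegree_lagrange_basis_add_one ht i; simp at this; omega)
  · have := hNt i
    simp only [N, eval_mul, eval_sub, eval_X, eval_C] at this
    rw [mul_assoc, this, mul_zero]

end Radau

lemma eq_sum_pow_of_quadrature {μ : Measure ℝ} {s : ℕ} {y : ℕ → ℝ}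
    (hy : ∀ k ≤ 2 * s, y k = unitIntervalMoments μ k) {ι : Type*} [Fintype ι] {t lam : ι → ℝ}
    (hex : ∀ p : ℝ[X], p.natDegree ≤ 2 * s →
      rieszFunctional (unitIntervalMoments μ) p = ∑ i, lam i * p.eval (t i))
    (k : ℕ) (hk : k ≤ 2 * s) : y k = ∑ i, lam i * t i ^ k := by
  rw [hy k hk, ← rieszFunctional_X_pow (unitIntervalMoments μ) k, hex _ (by simpa using hk)]
  simp

section PrincipalRepresentations

variable {μ : Measure ℝ} [IsFiniteMeasure μ] {s : ℕ} {y : ℕ → ℝ}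
  (hy : ∀ k ≤ 2 * s, y k = unitIntervalMoments μ k)
include hy

variable (hrank : (H1 s y).rank = s + 1)
include hrank

lemma exists_isLeast_H3_extend :
    ∃ t lam : Fin (s + 1) → ℝ, Function.Injective t ∧ (∀ i, t i ∈ Icc (0 : ℝ) 1) ∧
      (∀ i, 0 < lam i) ∧ (∀ k ≤ 2 * s, y k = ∑ i, lam i * t i ^ k) ∧
      IsLeast {T | (H3 s (fun k => if k = 2 * s + 1 then T else y k)).PosSemidef}
        (∑ i, lam i * t i ^ (2 * s + 1)) := by
  obtain ⟨g, hg, hgdeg, t, lam, ht, hI, hlam, hex, hnodes⟩ :=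
    exists_radau_quadrature (fun q hq hdeg => rieszFunctional_sq_pos_of_rank hy hrank hq hdeg)
      one_ne_zero (w₀ := 0) (fun x hx => by simpa using hx.1) ⟨le_rfl, zero_le_one⟩
  have hm := eq_sum_pow_of_quadrature hy hex
  exact ⟨t, lam, ht, hI, hlam, hm, isLeast_H3_extend hm (fun i => (hlam i).le)
    (fun i => (hI i).1) hg hgdeg (by simpa using hnodes)⟩

lemma exists_isGreatest_H4_extend :
    ∃ t lam : Fin (s + 1) → ℝ, Function.Injective t ∧ (∀ i, t i ∈ Icc (0 : ℝ) 1) ∧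
      (∀ i, 0 < lam i) ∧ (∀ k ≤ 2 * s, y k = ∑ i, lam i * t i ^ k) ∧
      IsGreatest {T | (H4 s (fun k => if k = 2 * s + 1 then T else y k)).PosSemidef}
        (∑ i, lam i * t i ^ (2 * s + 1)) := by
  obtain ⟨g, hg, hgdeg, t, lam, ht, hI, hlam, hex, hnodes⟩ :=
    exists_radau_quadrature (fun q hq hdeg => rieszFunctional_sq_pos_of_rank hy hrank hq hdeg)
      (neg_ne_zero.mpr one_ne_zero) (w₀ := 1) (fun x hx => by linarith [hx.2]) ⟨zero_le_one, le_rfl⟩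
  have hm := eq_sum_pow_of_quadrature hy hex
  exact ⟨t, lam, ht, hI, hlam, hm, isGreatest_H4_extend hm (fun i => (hlam i).le)
    (fun i => (hI i).2) hg hgdeg fun i => by linear_combination hnodes i⟩

end PrincipalRepresentations

lemma sum_pow_eq_of_isLeast_of_isGreatest {ι : Type*} [Fintype ι] {s : ℕ} {y : ℕ → ℝ} {z : ℝ}
    (hl : IsLeast {T | (H3 s (fun k => if k = 2 * s + 1 then T else y k)).PosSemidef} z)
    (hu : IsGreatest {T | (H4 s (fun k => if k = 2 * s + 1 then T else y k)).PosSemidef} z)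
    {t lam : ι → ℝ} (ht : ∀ i, t i ∈ Icc (0 : ℝ) 1) (hlam : ∀ i, 0 ≤ lam i)
    (hm : ∀ k ≤ 2 * s, y k = ∑ i, lam i * t i ^ k) :
    ∑ i, lam i * t i ^ (2 * s + 1) = z :=
  le_antisymm (hu.2 (posSemidef_H4_extend hm hlam fun i => (ht i).2))
    (hl.2 (posSemidef_H3_extend hm hlam fun i => (ht i).1))

theorem stmt17_general (s : ℕ) (y : ℕ → ℝ)
    (hrep : ∃ μ : Measure ℝ, IsFiniteMeasure μ ∧ μ (Set.Icc (0 : ℝ) 1)ᶜ = 0 ∧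
        ∀ k ≤ 2 * s, y k = ∫ x, x ^ k ∂μ)
    (hrank : (H1 s y).rank = s + 1)
    (l u : ℝ)
    (hl : l = sInf {t : ℝ | (H3 s (fun k => if k = 2 * s + 1 then t else y k)).PosSemidef})
    (hu : u = sSup {t : ℝ | (H4 s (fun k => if k = 2 * s + 1 then t else y k)).PosSemidef}) :
    (∀ t₁ lam₁ t₂ lam₂ : Fin (s + 1) → ℝ,
        Function.Injective t₁ → (∀ i, t₁ i ∈ Set.Icc (0 : ℝ) 1) → (∀ i, 0 < lam₁ i) →
        (∀ k ≤ 2 * s, y k = ∑ i, lam₁ i * t₁ i ^ k) →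
        Function.Injective t₂ → (∀ i, t₂ i ∈ Set.Icc (0 : ℝ) 1) → (∀ i, 0 < lam₂ i) →
        (∀ k ≤ 2 * s, y k = ∑ i, lam₂ i * t₂ i ^ k) →
        ∃ σ : Equiv.Perm (Fin (s + 1)), ∀ i, t₂ (σ i) = t₁ i ∧ lam₂ (σ i) = lam₁ i) ↔
      l = u := by
  obtain ⟨μ, _, hsupp, hint⟩ := hrep
  have hy (k : ℕ) (hk : k ≤ 2 * s) : y k = unitIntervalMoments μ k := by
    rw [hint k hk, unitIntervalMoments,
      Measure.restrict_eq_self_of_ae_mem (s := Icc (0 : ℝ) 1) (mem_ae_iff.mpr hsupp)]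
  obtain ⟨tL, lamL, htL, hIL, hlamL, hmL, hL⟩ := exists_isLeast_H3_extend hy hrank
  obtain ⟨tU, lamU, htU, hIU, hlamU, hmU, hU⟩ := exists_isGreatest_H4_extend hy hrank
  rw [hl, hu, hL.csInf_eq, hU.csSup_eq]
  constructor
  · intro huniq
    obtain ⟨σ, hσ⟩ := huniq tL lamL tU lamU htL hIL hlamL hmL htU hIU hlamU hmU
    rw [← Equiv.sum_comp σ fun j => lamU j * tU j ^ (2 * s + 1)]
    simp [hσ]
  · intro hLU t₁ lam₁ t₂ lam₂ ht₁ hI₁ hlam₁ hm₁ ht₂ hI₂ hlam₂ hm₂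
    rw [← hLU] at hU
    refine exists_perm_of_sum_pow_eq (fun k hk => ?_) ht₁ ht₂ fun i => (hlam₂ i).ne'
    rcases (by simp at hk; omega : k ≤ 2 * s ∨ k = 2 * s + 1) with hk | rfl
    · rw [← hm₁ k hk, ← hm₂ k hk]
    · rw [sum_pow_eq_of_isLeast_of_isGreatest hL hU hI₁ (fun i => (hlam₁ i).le) hm₁,
        sum_pow_eq_of_isLeast_of_isGreatest hL hU hI₂ (fun i => (hlam₂ i).le) hm₂]

/-- for `y = (y_0, ..., y_{2s})` with `y_0 > 0`, admitting a representing
measure in `[0,1]`, with `rank H₁(y) = s + 1`: letting `l` and `u` be respectively the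
minimal and maximal value of `t` for which the extension `ỹ(t) = (y_0, ..., y_{2s}, t)`
admits a representing measure in `[0,1]` (equivalently `l = min{t : H₃(ỹ(t)) ⪰ 0}`,
`u = max{t : H₄(ỹ(t)) ⪰ 0}`), the `(s+1)`-atomic representing measure of `y`
supported in `[0,1]` is unique iff `l = u`. -/
theorem stmt17 (s : ℕ) (y : ℕ → ℝ) (h0 : 0 < y 0)
    (hrep : ∃ μ : Measure ℝ, IsFiniteMeasure μ ∧ μ (Set.Icc (0 : ℝ) 1)ᶜ = 0 ∧
        ∀ k ≤ 2 * s, y k = ∫ x, x ^ k ∂μ)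
    (hrank : (H1 s y).rank = s + 1)
    (l u : ℝ)
    (hl : l = sInf {t : ℝ | (H3 s (fun k => if k = 2 * s + 1 then t else y k)).PosSemidef})
    (hu : u = sSup {t : ℝ | (H4 s (fun k => if k = 2 * s + 1 then t else y k)).PosSemidef}) :
    (∀ t₁ lam₁ t₂ lam₂ : Fin (s + 1) → ℝ,
        Function.Injective t₁ → (∀ i, t₁ i ∈ Set.Icc (0 : ℝ) 1) → (∀ i, 0 < lam₁ i) →
        (∀ k ≤ 2 * s, y k = ∑ i, lam₁ i * t₁ i ^ k) →
        Function.Injective t₂ → (∀ i, t₂ i ∈ Set.Icc (0 : ℝ) 1) → (∀ i, 0 < lam₂ i) →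
        (∀ k ≤ 2 * s, y k = ∑ i, lam₂ i * t₂ i ^ k) →
        ∃ σ : Equiv.Perm (Fin (s + 1)), ∀ i, t₂ (σ i) = t₁ i ∧ lam₂ (σ i) = lam₁ i) ↔
      l = u :=
  stmt17_general s y hrep hrank l u hl hu
end
end
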